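/- arXiv:2102.09829 — 4 statements merged into one kernel-verified Lean document; each statement's English description precedes it below -/
import Mathlib

section
/- Lower estimate for the distance between levels of generalized Margulis domains, part (ii) (Proposition 4.6(ii)): Let (X,σ) be a δ-hyperbolic GCB-space which is P0-packed at scale r0, let 0 < ε1 ≤ ε2 with ε2 ≤ r0, let g be a non-elliptic σ-isometry of X such that ℳ_{ε1}(g) ≠ ∅, and let x ∈ X be a point not belonging to ℳ_{ε2}(g). Then d(x, ℳ_{ε1}(g)) > ( log(2/ε1 − 1) / (2·log(1 + P0)) )·ε2 − 1/2. -/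
open Metric Filter

/-- Four-points condition for `δ`-hyperbolicity. -/
def IsDeltaHyperbolic (X : Type*) [MetricSpace X] (δ : ℝ) : Prop :=
  ∀ x y z w : X,
    dist x y + dist z w ≤ max (dist x z + dist y w) (dist x w + dist y z) + 2 * δ

/-- `X` is `P₀`-packed at scale `r₀`: any subset of a closed ball of radius `3r₀` whose
points are pairwise at distance `> 2r₀` has cardinality at most `P₀`. -/
def IsPacked (X : Type*) [MetricSpace X] (P₀ r₀ : ℝ) : Prop :=
  ∀ x : X, ∀ S : Finset X, (↑S ⊆ closedBall x (3 * r₀)) →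
    (∀ a ∈ S, ∀ b ∈ S, a ≠ b → 2 * r₀ < dist a b) → (S.card : ℝ) ≤ P₀

/-- A geodesically complete, convex, consistent, reversible geodesic bicombing on `X`.
Together with completeness of `X` this is the notion of GCB-space. -/
structure IsGCB {X : Type*} [MetricSpace X] (σ : X → X → ℝ → X) : Prop where
  source : ∀ x y : X, σ x y 0 = x
  target : ∀ x y : X, σ x y 1 = y
  geodesic : ∀ x y : X, ∀ t ∈ Set.Icc (0:ℝ) 1, ∀ t' ∈ Set.Icc (0:ℝ) 1,
    dist (σ x y t) (σ x y t') = |t - t'| * dist x y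
  convex : ∀ x y x' y' : X,
    ConvexOn ℝ (Set.Icc (0:ℝ) 1) fun t => dist (σ x y t) (σ x' y' t)
  consistent : ∀ x y : X, ∀ s t l : ℝ, 0 ≤ s → s ≤ t → t ≤ 1 → l ∈ Set.Icc (0:ℝ) 1 →
    σ (σ x y s) (σ x y t) l = σ x y ((1 - l) * s + l * t)
  reversible : ∀ x y : X, ∀ t ∈ Set.Icc (0:ℝ) 1, σ x y t = σ y x (1 - t)
  geodComplete : ∀ x y : X, ∃ γ : ℝ → X, Isometry γ ∧
    (∀ s t : ℝ, s ≤ t → ∀ l ∈ Set.Icc (0:ℝ) 1, σ (γ s) (γ t) l = γ (s + l * (t - s))) ∧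
    (∀ t ∈ Set.Icc (0:ℝ) 1, σ x y t = γ (t * dist x y))

/-- `g` is a `σ`-isometry: a surjective isometry preserving the bicombing `σ`. -/
def IsSigmaIsometry {X : Type*} [MetricSpace X] (σ : X → X → ℝ → X) (g : X ≃ᵢ X) : Prop :=
  ∀ x y : X, ∀ t ∈ Set.Icc (0:ℝ) 1, g (σ x y t) = σ (g x) (g y) t

/-- A group of isometries is discrete if for every `x` and `R` only finitely many of its
elements displace `x` at most `R`. -/
def IsDiscreteSubgroup {X : Type*} [MetricSpace X] (Γ : Subgroup (X ≃ᵢ X)) : Prop :=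
  ∀ x : X, ∀ R : ℝ, {g : X ≃ᵢ X | g ∈ Γ ∧ dist x (g x) ≤ R}.Finite

/-- A group is virtually nilpotent if it has a nilpotent subgroup of finite index. -/
def IsVirtuallyNilpotent (G : Type*) [Group G] : Prop :=
  ∃ H : Subgroup G, H.FiniteIndex ∧ Group.IsNilpotent H

/-- `Γ` is non-elementary: it contains two elements generating a subgroup that is not
virtually nilpotent. -/
def IsNonElementary {X : Type*} [MetricSpace X] (Γ : Subgroup (X ≃ᵢ X)) : Prop :=
  ∃ a b : X ≃ᵢ X, a ∈ Γ ∧ b ∈ Γ ∧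
    ¬ IsVirtuallyNilpotent ↥(Subgroup.closure ({a, b} : Set (X ≃ᵢ X)))

/-- An isometry is non-elliptic if its orbits are unbounded. -/
def IsNonElliptic {X : Type*} [MetricSpace X] (g : X ≃ᵢ X) : Prop :=
  ∀ x : X, ¬ Bornology.IsBounded (Set.range fun n : ℤ => (g ^ n) x)

/-- The `r`-almost stabilizer `Γ_r(x)`, generated by the elements of `Γ` displacing `x`
at most `r`. -/
def almostStabilizer {X : Type*} [MetricSpace X] (Γ : Subgroup (X ≃ᵢ X)) (r : ℝ) (x : X) :
    Subgroup (X ≃ᵢ X) :=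
  Subgroup.closure {g : X ≃ᵢ X | g ∈ Γ ∧ dist x (g x) ≤ r}

/-- The nilpotence radius of `Γ` at `x`. -/
noncomputable def nilrad {X : Type*} [MetricSpace X] (Γ : Subgroup (X ≃ᵢ X)) (x : X) : ℝ :=
  sSup {r : ℝ | 0 ≤ r ∧ IsVirtuallyNilpotent ↥(almostStabilizer Γ r x)}

/-- The Margulis domain `M_ε(g)`. -/
def margulisDomain {X : Type*} [MetricSpace X] (g : X ≃ᵢ X) (ε : ℝ) : Set X :=
  {x : X | dist x (g x) ≤ ε}

/-- The generalized Margulis domain `ℳ_ε(g) = ⋃_{i ≠ 0} M_ε(gⁱ)`. -/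
def genMargulisDomain {X : Type*} [MetricSpace X] (g : X ≃ᵢ X) (ε : ℝ) : Set X :=
  ⋃ i ∈ {i : ℤ | i ≠ 0}, margulisDomain (g ^ i) ε

/-- `f` parameterizes a geodesic segment from `x` to `y` on `[0, dist x y]`. -/
def IsGeodesicFrom {X : Type*} [MetricSpace X] (f : ℝ → X) (x y : X) : Prop :=
  f 0 = x ∧ f (dist x y) = y ∧
    ∀ s ∈ Set.Icc 0 (dist x y), ∀ t ∈ Set.Icc 0 (dist x y), dist (f s) (f t) = |s - t|

/-- `X` is a geodesic space. -/
def IsGeodesicSpace (X : Type*) [MetricSpace X] : Prop :=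
  ∀ x y : X, ∃ f : ℝ → X, IsGeodesicFrom f x y

/-- `C` is `lam`-quasiconvex: any two of its points are joined by a geodesic contained in
the closed `lam`-neighbourhood of `C`. -/
def IsQuasiconvex {X : Type*} [MetricSpace X] (lam : ℝ) (C : Set X) : Prop :=
  ∀ x ∈ C, ∀ y ∈ C, ∃ f : ℝ → X, IsGeodesicFrom f x y ∧
    ∀ t ∈ Set.Icc 0 (dist x y), infDist (f t) C ≤ lam

/-- `C` is a convex subset: any two of its points are joined by a geodesic inside `C`. -/
def IsConvexSubset {X : Type*} [MetricSpace X] (C : Set X) : Prop :=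
  ∀ x ∈ C, ∀ y ∈ C, ∃ f : ℝ → X, IsGeodesicFrom f x y ∧
    ∀ t ∈ Set.Icc 0 (dist x y), f t ∈ C

/-- Arc-length concatenation of three paths, of respective lengths `d₁`, `d₂` and the rest. -/
noncomputable def concatPath {X : Type*} (d₁ d₂ : ℝ) (f₁ f₂ f₃ : ℝ → X) : ℝ → X :=
  fun t => if t ≤ d₁ then f₁ t else if t ≤ d₁ + d₂ then f₂ (t - d₁) else f₃ (t - d₁ - d₂)


/-!
Take `y` with `d(y, gⁱ y) ≤ ε₁`. Since `x ∉ ℳ_{ε₂}(g)`, the orbit points `g^{ij} x`, `|j| ≤ K`,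
are pairwise more than `ε₂` apart, and they lie in the ball of radius `d(x, y) + K ε₁` about `y`.
Packing passes from scale `r₀` to the scale `r = ε₂ / 2` through the homotheties of the bicombing,
and by induction on `n` a ball of radius `(n + 3) r` contains at most `P₀ ^ (n + 1)` points that are
`2r`-separated. Hence `d(x, y) > (n + 3) r - (P₀ ^ (n + 1) + 1) ε₁ / 2` for every `n`, uniformly in
`y`; the choice `n + 2 ≈ log (2 / ε₁ - 1) / log (1 + P₀)` gives the estimate, and for small values of
this exponent the triangle inequality `d(x, gⁱ x) ≤ 2 d(x, y) + ε₁` already suffices.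
-/
namespace IsGCB

variable {X : Type*} [MetricSpace X] {σ : X → X → ℝ → X}

lemma dist_sigma_sigma_le (hσ : IsGCB σ) (x y z : X) {t : ℝ} (ht : t ∈ Set.Icc (0 : ℝ) 1) :
    dist (σ x y t) (σ x z t) ≤ t * dist y z := by
  have h := (hσ.convex x y x z).2 (Set.left_mem_Icc.2 zero_le_one)
    (Set.right_mem_Icc.2 zero_le_one) (sub_nonneg.2 ht.2) ht.1 (sub_add_cancel 1 t)
  simpa [hσ.source, hσ.target] using h

lemma exists_sigma_inv_eq (hσ : IsGCB σ) (x y : X) {c : ℝ} (hc : 1 ≤ c) :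
    ∃ z, dist x z = c * dist x y ∧ σ x z c⁻¹ = y := by
  obtain ⟨γ, hγ, hline, hseg⟩ := hσ.geodComplete x y
  have hγ0 : γ 0 = x := by simpa [hσ.source] using (hseg 0 (by simp)).symm
  have hγ1 : γ (dist x y) = y := by simpa [hσ.target] using (hseg 1 (by simp)).symm
  have hcd : 0 ≤ c * dist x y := by positivity
  refine ⟨γ (c * dist x y), ?_, ?_⟩
  · nth_rw 1 [← hγ0]
    rw [hγ.dist_eq, Real.dist_eq, zero_sub, abs_neg, abs_of_nonneg hcd]
  · have hc₀ : c ≠ 0 := by positivity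
    nth_rw 1 [← hγ0]
    rw [hline 0 _ hcd _ ⟨by positivity, inv_le_one_of_one_le₀ hc⟩]
    simpa [hc₀] using hγ1

lemma exists_dist_le_dist_le (hσ : IsGCB σ) {c y : X} {R s : ℝ} (hR : 0 ≤ R) (hs : 0 ≤ s)
    (hy : dist c y ≤ R + s) : ∃ p, dist c p ≤ R ∧ dist p y ≤ s := by
  rcases le_or_gt (dist c y) R with hyR | hyR
  · exact ⟨y, hyR, by simpa using hs⟩
  have hd : 0 < dist c y := hR.trans_lt hyR
  have ht : R / dist c y ∈ Set.Icc (0 : ℝ) 1 := ⟨by positivity, (div_le_one hd).2 hyR.le⟩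
  refine ⟨σ c y (R / dist c y), ?_, ?_⟩
  · have h := hσ.geodesic c y 0 (by simp) _ ht
    rw [hσ.source, zero_sub, abs_neg, abs_of_nonneg ht.1, div_mul_cancel₀ _ hd.ne'] at h
    exact h.le
  · have h := hσ.geodesic c y _ ht 1 (by simp)
    rw [hσ.target, abs_of_nonpos (by linarith [ht.2]), neg_sub, sub_mul, one_mul,
      div_mul_cancel₀ _ hd.ne'] at h
    linarith

end IsGCB

lemma Finset.exists_subset_pairwise_lt_dist_cover {X : Type*} [MetricSpace X] (S : Finset X)
    {ρ : ℝ} (hρ : 0 ≤ ρ) : ∃ T ⊆ S, (T : Set X).Pairwise (fun a b => ρ < dist a b) ∧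
      ∀ z ∈ S, ∃ t ∈ T, dist z t ≤ ρ := by
  have hfin : packingNumber ρ.toNNReal (S : Set X) ≠ ⊤ :=
    ne_top_of_le_ne_top (by simp) (packingNumber_le_encard_self _)
  have hT := S.finite_toSet.subset (maximalSeparatedSet_subset (ε := ρ.toNNReal))
  refine ⟨hT.toFinset, by simpa using maximalSeparatedSet_subset, ?_, fun z hz => ?_⟩
  · intro a ha b hb hab
    have h := isSeparated_maximalSeparatedSet (by simpa using ha) (by simpa using hb) hab
    change ENNReal.ofReal ρ < edist a b at h
    rw [edist_dist] at h
    exact (ENNReal.ofReal_lt_ofReal_iff'.1 h).1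
  · obtain ⟨t, ht, hzt⟩ := Set.mem_iUnion₂.1
      ((isCover_maximalSeparatedSet hfin).subset_iUnion_closedBall hz)
    exact ⟨t, by simpa using ht, by simpa [Real.coe_toNNReal _ hρ] using hzt⟩

namespace IsPacked

variable {X : Type*} [MetricSpace X] {P₀ r : ℝ}

lemma one_le (hpack : IsPacked X P₀ r) (hr : 0 ≤ r) (x : X) : 1 ≤ P₀ := by
  simpa using hpack x {x} (by simpa using mem_closedBall_self (x := x) (by positivity : 0 ≤ 3 * r))
    (by simp)

lemma of_scale_le {σ : X → X → ℝ → X} {r₀ : ℝ} (hpack : IsPacked X P₀ r₀) (hσ : IsGCB σ)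
    (hr : 0 < r) (hrr : r ≤ r₀) : IsPacked X P₀ r := by
  classical
  intro x S hS hsep
  have hc : 1 ≤ r₀ / r := (one_le_div hr).2 hrr
  choose Φ hΦx hΦσ using fun y => hσ.exists_sigma_inv_eq x y hc
  -- `Φ` is the homothety of ratio `r₀ / r` centred at `x`; convexity makes it expand distances.
  have hexpand : ∀ y z, r₀ / r * dist y z ≤ dist (Φ y) (Φ z) := by
    intro y z
    have h := hσ.dist_sigma_sigma_le x (Φ y) (Φ z)
      ⟨by positivity, inv_le_one_of_one_le₀ hc⟩
    rw [hΦσ, hΦσ] at h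
    rwa [le_inv_mul_iff₀ (by positivity)] at h
  have hsep' : ∀ a ∈ S, ∀ b ∈ S, a ≠ b → 2 * r₀ < dist (Φ a) (Φ b) := by
    intro a ha b hb hab
    calc 2 * r₀ = r₀ / r * (2 * r) := by field_simp
      _ < r₀ / r * dist a b := by gcongr; exact hsep a ha b hb hab
      _ ≤ dist (Φ a) (Φ b) := hexpand a b
  have hinj : Set.InjOn Φ S := fun a ha b hb hab => by
    by_contra hne
    have h := hsep' a ha b hb hne
    rw [hab, dist_self] at h
    linarith
  rw [← Finset.card_image_of_injOn hinj]
  refine hpack x _ ?_ ?_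
  · intro z hz
    obtain ⟨y, hy, rfl⟩ := by simpa using hz
    have hxy : dist x y ≤ 3 * r := by simpa [dist_comm] using hS hy
    rw [mem_closedBall, dist_comm, hΦx]
    calc r₀ / r * dist x y ≤ r₀ / r * (3 * r) := by gcongr
      _ = 3 * r₀ := by field_simp
  · simp only [Finset.mem_image]
    rintro _ ⟨a, ha, rfl⟩ _ ⟨b, hb, rfl⟩ hab
    exact hsep' a ha b hb (ne_of_apply_ne Φ hab)

lemma card_le_card_mul (hpack : IsPacked X P₀ r) {S T : Finset X}
    (hsep : (S : Set X).Pairwise fun a b => 2 * r < dist a b)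
    (hcov : ∀ y ∈ S, ∃ t ∈ T, dist t y ≤ 3 * r) : (S.card : ℝ) ≤ T.card * P₀ := by
  classical
  have hsub : S ⊆ T.biUnion fun t => S.filter (dist t · ≤ 3 * r) := fun y hy => by
    obtain ⟨t, ht, hty⟩ := hcov y hy
    exact Finset.mem_biUnion.2 ⟨t, ht, Finset.mem_filter.2 ⟨hy, hty⟩⟩
  calc (S.card : ℝ) ≤ ∑ t ∈ T, ((S.filter (dist t · ≤ 3 * r)).card : ℝ) := by
        exact_mod_cast (Finset.card_le_card hsub).trans Finset.card_biUnion_le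
    _ ≤ ∑ _t ∈ T, P₀ := Finset.sum_le_sum fun t _ => hpack t _
        (fun y hy => by simpa [dist_comm] using (Finset.mem_filter.1 hy).2)
        (fun a ha b hb => hsep (Finset.mem_filter.1 ha).1 (Finset.mem_filter.1 hb).1)
    _ = T.card * P₀ := by rw [Finset.sum_const, nsmul_eq_mul]

lemma card_le_pow (hpack : IsPacked X P₀ r) {σ : X → X → ℝ → X} (hσ : IsGCB σ) (hr : 0 ≤ r)
    (n : ℕ) {c : X} {S : Finset X} (hS : ↑S ⊆ closedBall c ((n + 3) * r))
    (hsep : (S : Set X).Pairwise fun a b => 2 * r < dist a b) :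
    (S.card : ℝ) ≤ P₀ ^ (n + 1) := by
  classical
  induction n generalizing S with
  | zero => simpa using hpack c S (by simpa using hS) fun a ha b hb => hsep ha hb
  | succ n ih =>
    have hproj : ∀ y ∈ S, ∃ p, dist c p ≤ (n + 3) * r ∧ dist p y ≤ r := fun y hy => by
      refine hσ.exists_dist_le_dist_le (by positivity) hr ?_
      have := hS hy
      rw [mem_closedBall, dist_comm] at this
      push_cast at this
      linarith
    choose! p hpc hpy using hproj
    obtain ⟨T, hTS, hTsep, hTcov⟩ :=
      (S.image p).exists_subset_pairwise_lt_dist_cover (ρ := 2 * r) (by positivity)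
    have hT : (T.card : ℝ) ≤ P₀ ^ (n + 1) := by
      refine ih (fun t ht => ?_) hTsep
      obtain ⟨y, hy, rfl⟩ := Finset.mem_image.1 (hTS ht)
      simpa [dist_comm] using hpc y hy
    have hcov : ∀ y ∈ S, ∃ t ∈ T, dist t y ≤ 3 * r := fun y hy => by
      obtain ⟨t, ht, hpt⟩ := hTcov (p y) (Finset.mem_image_of_mem p hy)
      refine ⟨t, ht, ?_⟩
      linarith [dist_triangle t (p y) y, dist_comm t (p y), hpy y hy]
    calc (S.card : ℝ) ≤ T.card * P₀ := hpack.card_le_card_mul hsep hcov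
      _ ≤ P₀ ^ (n + 1) * P₀ := by gcongr; linarith [hpack.one_le hr c]
      _ = P₀ ^ (n + 1 + 1) := (pow_succ _ _).symm

end IsPacked

lemma sub_lt_of_forall_two_mul_add_one_le {D R N ε : ℝ} (hε : 0 < ε) (hN : 0 ≤ N)
    (h : ∀ K : ℕ, D + K * ε ≤ R → 2 * K + 1 ≤ N) : R - (N + 1) * ε / 2 < D := by
  by_contra! hD
  have hRD : 0 ≤ (R - D) / ε := div_nonneg (by nlinarith) hε.le
  set K := ⌊(R - D) / ε⌋₊
  have hK : K * ε ≤ R - D := (le_div_iff₀ hε).1 (Nat.floor_le hRD)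
  have hK' : R - D < (K + 1) * ε := (div_lt_iff₀ hε).1 (Nat.lt_floor_add_one _)
  nlinarith [mul_le_mul_of_nonneg_right (h K (by linarith)) hε.le]

namespace IsometryEquiv

variable {X : Type*} [MetricSpace X]

lemma dist_pow_apply_le (h : X ≃ᵢ X) (y : X) (n : ℕ) :
    dist y ((h ^ n) y) ≤ n * dist y (h y) := by
  induction n with
  | zero => simp
  | succ n ih =>
    calc dist y ((h ^ (n + 1)) y) ≤ dist y ((h ^ n) y) + dist ((h ^ n) y) ((h ^ n) (h y)) := by
          rw [pow_succ, mul_apply]; exact dist_triangle _ _ _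
      _ ≤ (n + 1 : ℕ) * dist y (h y) := by
          rw [(h ^ n).dist_eq]; push_cast; linarith

lemma dist_zpow_apply_le (h : X ≃ᵢ X) (y : X) (k : ℤ) :
    dist y ((h ^ k) y) ≤ |k| * dist y (h y) := by
  obtain ⟨n, rfl | rfl⟩ := Int.eq_nat_or_neg k
  · simpa using h.dist_pow_apply_le y n
  · calc dist y ((h ^ (-(n : ℤ))) y) = dist ((h ^ n) y) y := by
          rw [← (h ^ n).dist_eq, zpow_neg, zpow_natCast, apply_inv_self]
      _ ≤ |(-(n : ℤ) : ℤ)| * dist y (h y) := by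
          rw [dist_comm]; simpa using h.dist_pow_apply_le y n

end IsometryEquiv

section GenMargulisDomain

variable {X : Type*} [MetricSpace X] {g : X ≃ᵢ X} {ε ρ : ℝ} {x y : X}

lemma mem_genMargulisDomain :
    y ∈ genMargulisDomain g ε ↔ ∃ i : ℤ, i ≠ 0 ∧ dist y ((g ^ i) y) ≤ ε := by
  simp [genMargulisDomain, margulisDomain]

lemma lt_dist_zpow_apply_of_notMem_genMargulisDomain (hx : x ∉ genMargulisDomain g ρ) {k : ℤ}
    (hk : k ≠ 0) : ρ < dist x ((g ^ k) x) := by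
  by_contra! h
  exact hx (mem_genMargulisDomain.2 ⟨k, hk, h⟩)

lemma sub_div_two_lt_dist_of_notMem_genMargulisDomain (hx : x ∉ genMargulisDomain g ρ)
    (hy : y ∈ genMargulisDomain g ε) : (ρ - ε) / 2 < dist x y := by
  obtain ⟨i, hi, hyi⟩ := mem_genMargulisDomain.1 hy
  have hρ := lt_dist_zpow_apply_of_notMem_genMargulisDomain hx hi
  have := dist_triangle4 x y ((g ^ i) y) ((g ^ i) x)
  rw [(g ^ i).dist_eq, dist_comm y x] at this
  linarith

lemma exists_finset_orbit_subset_closedBall (hρ : 0 ≤ ρ) (hx : x ∉ genMargulisDomain g ρ)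
    (hy : y ∈ genMargulisDomain g ε) (K : ℕ) :
    ∃ S : Finset X, S.card = 2 * K + 1 ∧ ↑S ⊆ closedBall y (dist x y + K * ε) ∧
      (S : Set X).Pairwise fun a b => ρ < dist a b := by
  classical
  obtain ⟨i, hi, hyi⟩ := mem_genMargulisDomain.1 hy
  set h := g ^ i
  have hsep : ∀ j j' : ℤ, j ≠ j' → ρ < dist ((h ^ j) x) ((h ^ j') x) := fun j j' hjj' => by
    have hj' : (h ^ j') x = (h ^ j) ((h ^ (j' - j)) x) := by
      rw [← IsometryEquiv.mul_apply, ← zpow_add, add_sub_cancel]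
    rw [hj', (h ^ j).dist_eq, ← zpow_mul]
    exact lt_dist_zpow_apply_of_notMem_genMargulisDomain hx
      (mul_ne_zero hi (sub_ne_zero.2 hjj'.symm))
  refine ⟨(Finset.Icc (-(K : ℤ)) K).image fun j => (h ^ j) x, ?_, ?_, ?_⟩
  · rw [Finset.card_image_of_injOn, Int.card_Icc]
    · omega
    · intro j _ j' _ hjj'
      by_contra hne
      have := hsep j j' hne
      rw [show (h ^ j) x = (h ^ j') x from hjj', dist_self] at this
      linarith
  · intro z hz
    obtain ⟨j, hj, rfl⟩ := by simpa using hz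
    have hj' : |(j : ℝ)| ≤ K := by
      rw [abs_le]; exact_mod_cast hj
    have := h.dist_zpow_apply_le y j
    rw [mem_closedBall]
    calc dist ((h ^ j) x) y ≤ dist ((h ^ j) x) ((h ^ j) y) + dist y ((h ^ j) y) := by
          rw [dist_comm y]; exact dist_triangle _ _ _
      _ ≤ dist x y + K * ε := by
          rw [(h ^ j).dist_eq]
          gcongr
          calc dist y ((h ^ j) y) ≤ |(j : ℝ)| * dist y (h y) := by exact_mod_cast this
            _ ≤ K * ε := by gcongr
  · simp only [Finset.coe_image]
    rintro _ ⟨j, -, rfl⟩ _ ⟨j', -, rfl⟩ hne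
    exact hsep j j' fun h' => hne (by rw [h'])

end GenMargulisDomain

lemma IsPacked.lt_dist_of_mem_genMargulisDomain {X : Type*} [MetricSpace X] {P₀ r ε : ℝ}
    {σ : X → X → ℝ → X} {g : X ≃ᵢ X} {x y : X} (hpack : IsPacked X P₀ r) (hσ : IsGCB σ)
    (hr : 0 ≤ r) (hε : 0 < ε) (hx : x ∉ genMargulisDomain g (2 * r))
    (hy : y ∈ genMargulisDomain g ε) (n : ℕ) :
    (n + 3) * r - (P₀ ^ (n + 1) + 1) * ε / 2 < dist x y := by
  have hP₀ : 0 ≤ P₀ := zero_le_one.trans (hpack.one_le hr x)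
  refine sub_lt_of_forall_two_mul_add_one_le hε (by positivity) fun K hK => ?_
  obtain ⟨S, hcard, hS, hsep⟩ := exists_finset_orbit_subset_closedBall (by positivity) hx hy K
  have := hpack.card_le_pow hσ hr n (hS.trans (closedBall_subset_closedBall hK)) hsep
  rw [hcard] at this
  exact_mod_cast this

section Arithmetic

variable {P₀ β r ε : ℝ}

lemma mul_sub_half_lt_three_mul_sub_of_lt_two (hP₀ : 0 ≤ P₀) (hβ : 1 ≤ β) (hβ₂ : β < 2)
    (hA : ((1 + P₀) ^ β + 1) * ε = 2) (hε : 0 < ε) (hr : 1 ≤ 2 * β * r) :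
    β * r - 1 / 2 < 3 * r - (P₀ + 1) * ε / 2 := by
  have hBern : 1 + β * P₀ ≤ (1 + P₀) ^ β := one_add_mul_self_le_rpow_one_add (by linarith) hβ
  have hβε : β * (P₀ + 1) * ε < 3 := by nlinarith
  nlinarith

lemma exists_mul_sub_half_lt_of_two_le (hP₀ : 1 ≤ P₀) (hβ : 2 ≤ β)
    (hA : ((1 + P₀) ^ β + 1) * ε = 2) (hε : 0 < ε) (hr : 0 ≤ r) :
    ∃ n : ℕ, β * r - 1 / 2 < (n + 3) * r - (P₀ ^ (n + 1) + 1) * ε / 2 := by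
  refine ⟨⌊β⌋₊ - 2, ?_⟩
  set n := ⌊β⌋₊ - 2
  have hn : n + 2 = ⌊β⌋₊ := Nat.sub_add_cancel (Nat.le_floor (by exact_mod_cast hβ))
  have hβn : β ≤ (n + 3 : ℕ) := by
    have := Nat.lt_floor_add_one β
    rw [← hn] at this
    push_cast at this ⊢
    linarith
  have hpow : 2 * (1 + P₀ ^ (n + 1)) ≤ (1 + P₀) ^ β :=
    calc 2 * (1 + P₀ ^ (n + 1)) ≤ (1 + P₀) * (1 + P₀) ^ (n + 1) := by
          gcongr
          · linarith
          · simpa using pow_add_pow_le zero_le_one (zero_le_one.trans hP₀) n.succ_ne_zero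
      _ = (1 + P₀) ^ ((n + 2 : ℕ) : ℝ) := by rw [Real.rpow_natCast, pow_succ' _ (n + 1)]
      _ ≤ (1 + P₀) ^ β := Real.rpow_le_rpow_of_exponent_le (by linarith)
          (by rw [hn]; exact Nat.floor_le (by linarith))
  have := mul_le_mul_of_nonneg_right hβn hr
  push_cast at this
  nlinarith

lemma mul_sub_half_lt_or_exists_lt (hP₀ : 1 ≤ P₀) (hA : (1 + P₀) ^ β = 2 / ε - 1) (hε : 0 < ε)
    (hεr : ε ≤ 2 * r) : β * r - 1 / 2 < (2 * r - ε) / 2 ∨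
      ∃ n : ℕ, β * r - 1 / 2 < (n + 3) * r - (P₀ ^ (n + 1) + 1) * ε / 2 := by
  have hAε : ((1 + P₀) ^ β + 1) * ε = 2 := by rw [hA]; field_simp; ring
  rcases lt_or_ge (β * r) (1 / 2) with hβr | hβr
  · exact .inl (by linarith)
  have hr : 0 < r := by linarith
  have hβ : 0 < β := pos_of_mul_pos_left (by linarith) hr.le
  rcases le_or_gt β 1 with hβ₁ | hβ₁
  · have hA₁ : 1 < (1 + P₀) ^ β := Real.one_lt_rpow (by linarith) hβ
    exact .inl (by nlinarith)
  rcases lt_or_ge β 2 with hβ₂ | hβ₂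
  · refine .inr ⟨0, ?_⟩
    simpa using mul_sub_half_lt_three_mul_sub_of_lt_two (by linarith) hβ₁.le hβ₂ hAε hε
      (by nlinarith)
  · exact .inr (exists_mul_sub_half_lt_of_two_le hP₀ hβ₂ hAε hε hr.le)

end Arithmetic

theorem genMargulis_lower_estimate_ii_general
    (P₀ r₀ : ℝ)
    (X : Type*) [MetricSpace X] (σ : X → X → ℝ → X)
    (hGCB : IsGCB σ) (hpack : IsPacked X P₀ r₀)
    (ε₁ ε₂ : ℝ) (hε₁ : 0 < ε₁) (h₁₂ : ε₁ ≤ ε₂) (hε₂ : ε₂ ≤ r₀)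
    (g : X ≃ᵢ X)
    (hM : (genMargulisDomain g ε₁).Nonempty)
    (x : X) (hx : x ∉ genMargulisDomain g ε₂) :
    Real.log (2 / ε₁ - 1) / (2 * Real.log (1 + P₀)) * ε₂ - 1 / 2 <
      infDist x (genMargulisDomain g ε₁) := by
  set β := Real.log (2 / ε₁ - 1) / Real.log (1 + P₀)
  have hr : 0 < ε₂ / 2 := by linarith
  have hP₀ : 1 ≤ P₀ := hpack.one_le (by linarith) x
  have hlog : 0 < Real.log (1 + P₀) := Real.log_pos (by linarith)
  rw [show Real.log (2 / ε₁ - 1) / (2 * Real.log (1 + P₀)) * ε₂ = β * (ε₂ / 2) by ring]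
  rcases le_or_gt (2 / ε₁ - 1) 1 with hA | hA
  · have hlogA : Real.log (2 / ε₁ - 1) ≤ 0 := by
      rw [← Real.log_abs]
      exact Real.log_nonpos (abs_nonneg _) (abs_le.2 ⟨by linarith [div_pos two_pos hε₁], hA⟩)
    have hβ : β ≤ 0 := div_nonpos_of_nonpos_of_nonneg hlogA hlog.le
    nlinarith [infDist_nonneg (x := x) (s := genMargulisDomain g ε₁)]
  have hβ : (1 + P₀) ^ β = 2 / ε₁ - 1 := Real.rpow_logb (by linarith) (by linarith) (by linarith)
  have hx' : x ∉ genMargulisDomain g (2 * (ε₂ / 2)) := by rwa [mul_div_cancel₀ _ two_ne_zero]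
  obtain h | ⟨n, h⟩ := mul_sub_half_lt_or_exists_lt (r := ε₂ / 2) hP₀ hβ hε₁ (by linarith)
  · exact h.trans_le ((le_infDist hM).2 fun y hy =>
      (sub_div_two_lt_dist_of_notMem_genMargulisDomain hx' hy).le)
  · exact h.trans_le ((le_infDist hM).2 fun y hy =>
      ((hpack.of_scale_le hGCB hr (by linarith)).lt_dist_of_mem_genMargulisDomain hGCB hr.le hε₁
        hx' hy n).le)

/-- **Proposition 4.6(ii)**: lower estimate for the distance between levels of generalized
Margulis domains at scales `ε₂ ≤ r₀`. -/
theorem genMargulis_lower_estimate_ii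
    (P₀ r₀ δ : ℝ) (hP₀ : 0 < P₀) (hr₀ : 0 < r₀) (hδ : 0 < δ)
    (X : Type*) [MetricSpace X] [CompleteSpace X] (σ : X → X → ℝ → X)
    (hGCB : IsGCB σ) (hhyp : IsDeltaHyperbolic X δ) (hpack : IsPacked X P₀ r₀)
    (ε₁ ε₂ : ℝ) (hε₁ : 0 < ε₁) (h₁₂ : ε₁ ≤ ε₂) (hε₂ : ε₂ ≤ r₀)
    (g : X ≃ᵢ X) (hσg : IsSigmaIsometry σ g) (hell : IsNonElliptic g)
    (hM : (genMargulisDomain g ε₁).Nonempty)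
    (x : X) (hx : x ∉ genMargulisDomain g ε₂) :
    Real.log (2 / ε₁ - 1) / (2 * Real.log (1 + P₀)) * ε₂ - 1 / 2 <
      infDist x (genMargulisDomain g ε₁) :=
  genMargulis_lower_estimate_ii_general P₀ r₀ X σ hGCB hpack ε₁ ε₂ hε₁ h₁₂ hε₂ g hM x hx
end

section
/- Key lemma for Helly's Theorem (unnumbered lemma in Section 3.3): Let X be a geodesic, δ-hyperbolic metric space, let λ ≥ 0, and let C1, C2 ⊆ X be two λ-quasiconvex subsets with C1 ∩ C2 ≠ ∅. Fix a point x0 ∈ X and assume there are points x1 ∈ C1 and x2 ∈ C2 satisfying d(x0,x1) ≤ d(x0,C1) + δ, d(x0,x2) ≤ d(x0,C2) + δ, and d(x0,x1) ≥ d(x0,x2) − δ. Then d(x1, C2) ≤ 119δ + 15λ. -/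
open Metric Filter

/-- Near-projection lemma: if `x₁` almost realizes the distance from `x₀` to a
`lam`-quasiconvex set `C`, then for any `y ∈ C` the concatenation `x₀ x₁ y` is an
almost-geodesic. -/
lemma helly_near_proj {X : Type*} [MetricSpace X] {δ lam : ℝ} (hδ : 0 ≤ δ) (hlam : 0 ≤ lam)
    (hhyp : IsDeltaHyperbolic X δ) {C : Set X} (hqc : IsQuasiconvex lam C)
    (x₀ x₁ y : X) (hx₁ : x₁ ∈ C) (hy : y ∈ C)
    (h : dist x₀ x₁ ≤ infDist x₀ C + δ) :
    dist x₀ x₁ + dist x₁ y ≤ dist x₀ y + 6 * δ + 2 * lam := by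
  obtain ⟨f, ⟨hf0, hfD, hfiso⟩, hfC⟩ := hqc x₁ hx₁ y hy
  set D := dist x₁ y with hD
  have hD0 : 0 ≤ D := dist_nonneg
  refine le_of_forall_pos_le_add fun ε hε => ?_
  have hc0 : (0:ℝ) < 3 * δ + lam + ε / 2 := by linarith
  set t := min D (3 * δ + lam + ε / 2) with ht
  have ht0 : 0 ≤ t := le_min hD0 (le_of_lt hc0)
  have htD : t ≤ D := min_le_left _ _
  have htc : t ≤ 3 * δ + lam + ε / 2 := min_le_right _ _
  have htmem : t ∈ Set.Icc (0:ℝ) D := ⟨ht0, htD⟩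
  have h0mem : (0:ℝ) ∈ Set.Icc (0:ℝ) D := ⟨le_refl _, hD0⟩
  have hDmem : D ∈ Set.Icc (0:ℝ) D := ⟨hD0, le_refl _⟩
  have h1 : dist x₁ (f t) = t := by
    have h' := hfiso 0 h0mem t htmem
    rw [hf0] at h'
    rw [h', abs_of_nonpos (by linarith)]; ring
  have h2 : dist (f t) y = D - t := by
    have h' := hfiso t htmem D hDmem
    rw [hfD] at h'
    rw [h', abs_of_nonpos (by linarith)]; ring
  have h3 : infDist x₀ C ≤ infDist (f t) C + dist x₀ (f t) := infDist_le_infDist_add_dist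
  have h4 : infDist (f t) C ≤ lam := hfC t htmem
  have h5 := hhyp x₀ (f t) x₁ y
  rw [dist_comm (f t) x₁, h1, h2] at h5
  have h6 : dist x₀ x₁ + D - 3 * δ - lam ≤
      max (dist x₀ x₁ + (D - t)) (dist x₀ y + t) := by linarith
  rcases le_max_iff.mp h6 with hc | hc
  · have htle : t ≤ 3 * δ + lam := by linarith
    have hDle : D ≤ 3 * δ + lam := by
      rcases min_cases D (3 * δ + lam + ε / 2) with ⟨hmin, _⟩ | ⟨hmin, _⟩
      · rw [← ht] at hmin; linarith
      · rw [← ht] at hmin; linarith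
    have htri : dist x₀ x₁ ≤ dist x₀ y + D := by
      calc dist x₀ x₁ ≤ dist x₀ y + dist y x₁ := dist_triangle _ _ _
        _ = dist x₀ y + D := by rw [dist_comm y x₁]
    linarith
  · linarith

/-- Key lemma for Helly's theorem (unnumbered lemma in Section 3.3). -/
theorem helly_key_lemma
    (δ lam : ℝ) (hlam : 0 ≤ lam)
    (X : Type*) [MetricSpace X]
    (hgeo : IsGeodesicSpace X) (hhyp : IsDeltaHyperbolic X δ)
    (C₁ C₂ : Set X) (hqc₁ : IsQuasiconvex lam C₁) (hqc₂ : IsQuasiconvex lam C₂)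
    (hint : (C₁ ∩ C₂).Nonempty)
    (x₀ x₁ x₂ : X) (hx₁ : x₁ ∈ C₁) (hx₂ : x₂ ∈ C₂)
    (h₁ : dist x₀ x₁ ≤ infDist x₀ C₁ + δ)
    (h₂ : dist x₀ x₂ ≤ infDist x₀ C₂ + δ)
    (h₁₂ : dist x₀ x₂ - δ ≤ dist x₀ x₁) :
    infDist x₁ C₂ ≤ 119 * δ + 15 * lam := by
  obtain ⟨y, hyC₁, hyC₂⟩ := hint
  have hδ : 0 ≤ δ := by
    have h' := infDist_le_dist_of_mem (x := x₀) hx₁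
    linarith
  have hA := helly_near_proj hδ hlam hhyp hqc₁ x₀ x₁ y hx₁ hyC₁ h₁
  have hB := helly_near_proj hδ hlam hhyp hqc₂ x₀ x₂ y hx₂ hyC₂ h₂
  -- bound on `dist x₁ x₂` via the four-point condition
  have h5 := hhyp x₁ x₂ x₀ y
  rw [dist_comm x₁ x₀, dist_comm x₂ x₀] at h5
  have h6 : dist x₁ x₂ + dist x₀ y - 2 * δ ≤
      max (dist x₀ x₁ + dist x₂ y) (dist x₁ y + dist x₀ x₂) := by linarith
  -- a point on a geodesic from `x₂` to `y` (inside the `lam`-neighbourhood of `C₂`)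
  obtain ⟨g, ⟨hg0, hgD, hgiso⟩, hgC⟩ := hqc₂ x₂ hx₂ y hyC₂
  set D₂ := dist x₂ y with hD2
  have hD20 : 0 ≤ D₂ := dist_nonneg
  set s := (dist x₁ x₂ + D₂ - dist x₁ y) / 2 with hs
  have htri1 : dist x₁ y ≤ dist x₁ x₂ + D₂ := dist_triangle _ _ _
  have htri2 : dist x₁ x₂ ≤ dist x₁ y + D₂ := by
    calc dist x₁ x₂ ≤ dist x₁ y + dist y x₂ := dist_triangle _ _ _
      _ = dist x₁ y + D₂ := by rw [dist_comm y x₂]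
  have hs0 : 0 ≤ s := by rw [hs]; linarith
  have hsD : s ≤ D₂ := by rw [hs]; linarith
  have hsmem : s ∈ Set.Icc (0:ℝ) D₂ := ⟨hs0, hsD⟩
  have h0mem : (0:ℝ) ∈ Set.Icc (0:ℝ) D₂ := ⟨le_refl _, hD20⟩
  have hDmem : D₂ ∈ Set.Icc (0:ℝ) D₂ := ⟨hD20, le_refl _⟩
  have hg1 : dist x₂ (g s) = s := by
    have h' := hgiso 0 h0mem s hsmem
    rw [hg0] at h'
    rw [h', abs_of_nonpos (by linarith)]; ring
  have hg2 : dist (g s) y = D₂ - s := by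
    have h' := hgiso s hsmem D₂ hDmem
    rw [hgD] at h'
    rw [h', abs_of_nonpos (by linarith)]; ring
  have h7 := hhyp x₁ (g s) x₂ y
  rw [dist_comm (g s) x₂, hg1, hg2] at h7
  have heq : dist x₁ x₂ + (D₂ - s) = dist x₁ y + s := by rw [hs]; ring
  rw [heq, max_self] at h7
  have h8 : infDist x₁ C₂ ≤ infDist (g s) C₂ + dist x₁ (g s) := infDist_le_infDist_add_dist
  have h9 : infDist (g s) C₂ ≤ lam := hgC s hsmem
  have htri3 : dist x₀ y ≤ dist x₀ x₂ + D₂ := dist_triangle _ _ _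
  rcases le_max_iff.mp h6 with hc | hc <;> linarith
end

section
/- Contracting projections, part (a) (Proposition 3.6(a)): Let X be a proper, geodesic, δ-hyperbolic metric space, let C ⊆ X be a closed convex subset, let y, y' ∈ X, and let c, c' ∈ C be projections of y and y' on C respectively, with d(c,c') > 9δ. Then for any choice of geodesic segments [y,c], [c,c'], [c',y'], the concatenated path [y,c] ∪ [c,c'] ∪ [c',y'], parameterized by arc length on the interval [0, d(y,c) + d(c,c') + d(c',y')], is a (1, 18δ)-quasigeodesic segment. -/
open Metric Filter

/-- Useful distance facts along a geodesic parameterization. -/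
private lemma geo_dist_left {X : Type*} [MetricSpace X] {f : ℝ → X} {x z : X}
    (hf : IsGeodesicFrom f x z) {s : ℝ} (hs : s ∈ Set.Icc 0 (dist x z)) :
    dist x (f s) = s := by
  have h := hf.2.2 0 ⟨le_rfl, dist_nonneg⟩ s hs
  rw [hf.1] at h
  rw [h, abs_of_nonpos (by linarith [hs.1])]; ring

private lemma geo_dist_right {X : Type*} [MetricSpace X] {f : ℝ → X} {x z : X}
    (hf : IsGeodesicFrom f x z) {s : ℝ} (hs : s ∈ Set.Icc 0 (dist x z)) :
    dist (f s) z = dist x z - s := by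
  have h := hf.2.2 s hs (dist x z) ⟨dist_nonneg, le_rfl⟩
  rw [hf.2.1] at h
  rw [h, abs_of_nonpos (by linarith [hs.2])]; ring

/-- Projection lemma: if `c` is a projection of `y` on the convex set `C`, then for any
`p ∈ C` we have `d(y,p) ≥ d(y,c) + d(c,p) - 4δ`. -/
private lemma proj_lower {X : Type*} [MetricSpace X] {δ : ℝ} (hδ : 0 ≤ δ)
    (hhyp : IsDeltaHyperbolic X δ) {C : Set X} (hC : IsConvexSubset C)
    {y c : X} (hc : c ∈ C) (hproj : dist y c = Metric.infDist y C)
    {p : X} (hp : p ∈ C) : dist y c + dist c p - 4 * δ ≤ dist y p := by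
  rcases le_or_gt (dist c p) (2 * δ) with hle | hlt
  · have h1 : Metric.infDist y C ≤ dist y p := Metric.infDist_le_dist_of_mem hp
    rw [← hproj] at h1
    linarith
  · apply le_of_forall_pos_le_add
    intro ε hε
    set ε' : ℝ := min ε (dist c p - 2 * δ) with hε'def
    have hε'pos : 0 < ε' := lt_min hε (by linarith)
    have hε'le : ε' ≤ ε := min_le_left _ _
    have hε'le2 : ε' ≤ dist c p - 2 * δ := min_le_right _ _
    obtain ⟨g, hg, hgC⟩ := hC c hc p hp
    set a : ℝ := 2 * δ + ε' with hadef
    have haI : a ∈ Set.Icc 0 (dist c p) := ⟨by positivity, by linarith⟩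
    have hmC : g a ∈ C := hgC a haI
    have hdcm : dist c (g a) = a := geo_dist_left hg haI
    have hdmp : dist (g a) p = dist c p - a := geo_dist_right hg haI
    have hym : dist y c ≤ dist y (g a) := by
      rw [hproj]; exact Metric.infDist_le_dist_of_mem hmC
    have h4 := hhyp y (g a) c p
    rcases max_cases (dist y c + dist (g a) p) (dist y p + dist (g a) c) with
      ⟨hmx, _⟩ | ⟨hmx, _⟩ <;> rw [hmx] at h4
    · rw [hdmp] at h4; linarith
    · rw [dist_comm (g a) c, hdcm] at h4; linarith

/-- **Proposition 3.6(a)** (contracting projections, part (a)): if the projections `c, c'`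
on a closed convex set `C` of two points `y, y'` satisfy `d(c,c') > 9δ`, then the
arc-length concatenation of geodesics `[y,c] ∪ [c,c'] ∪ [c',y']` is a
`(1, 18δ)`-quasigeodesic segment. -/
theorem contracting_projections_a
    (δ : ℝ) (X : Type*) [MetricSpace X] [ProperSpace X]
    (hgeo : IsGeodesicSpace X) (hhyp : IsDeltaHyperbolic X δ)
    (C : Set X) (hCcl : IsClosed C) (hCconv : IsConvexSubset C)
    (y y' c c' : X)
    (hcC : c ∈ C) (hc'C : c' ∈ C)
    (hproj : dist y c = infDist y C) (hproj' : dist y' c' = infDist y' C)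
    (hsep : 9 * δ < dist c c')
    (f₁ f₂ f₃ : ℝ → X)
    (hf₁ : IsGeodesicFrom f₁ y c) (hf₂ : IsGeodesicFrom f₂ c c')
    (hf₃ : IsGeodesicFrom f₃ c' y') :
    ∀ s ∈ Set.Icc 0 (dist y c + dist c c' + dist c' y'),
      ∀ t ∈ Set.Icc 0 (dist y c + dist c c' + dist c' y'),
        |s - t| - 18 * δ ≤
            dist (concatPath (dist y c) (dist c c') f₁ f₂ f₃ s)
              (concatPath (dist y c) (dist c c') f₁ f₂ f₃ t) ∧
          dist (concatPath (dist y c) (dist c c') f₁ f₂ f₃ s)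
              (concatPath (dist y c) (dist c c') f₁ f₂ f₃ t) ≤ |s - t| + 18 * δ := by
  classical
  have hδ0 : 0 ≤ δ := by have h := hhyp y y y y; simp at h; linarith
  set d1 := dist y c with hd1
  set d2 := dist c c' with hd2
  set d3 := dist c' y' with hd3
  have hd1n : 0 ≤ d1 := dist_nonneg
  have hd2n : 0 ≤ d2 := dist_nonneg
  have hd3n : 0 ≤ d3 := dist_nonneg
  -- Two applications of the projection lemma
  have hyc' : d1 + d2 - 4 * δ ≤ dist y c' :=
    proj_lower hδ0 hhyp hCconv hcC hproj hc'C
  have hy'c : d3 + d2 - 4 * δ ≤ dist y' c := by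
    have h := proj_lower hδ0 hhyp hCconv hc'C hproj' hcC
    rw [dist_comm c' c, dist_comm y' c', ← hd2, ← hd3] at h
    exact h
  set γ := concatPath d1 d2 f₁ f₂ f₃ with hγ
  -- evaluation lemmas for the concatenation
  have eval1 : ∀ s : ℝ, s ≤ d1 → γ s = f₁ s := by
    intro s h; simp only [hγ, concatPath, if_pos h]
  have eval2 : ∀ s : ℝ, d1 < s → s ≤ d1 + d2 → γ s = f₂ (s - d1) := by
    intro s h h'; simp only [hγ, concatPath, if_neg (not_le.mpr h), if_pos h']
  have eval3 : ∀ s : ℝ, d1 + d2 < s → γ s = f₃ (s - d1 - d2) := by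
    intro s h
    simp only [hγ, concatPath, if_neg (not_le.mpr (by linarith : d1 < s)),
      if_neg (not_le.mpr h)]
  -- the key estimate for ordered pairs
  have key : ∀ s ∈ Set.Icc (0:ℝ) (d1 + d2 + d3), ∀ t ∈ Set.Icc (0:ℝ) (d1 + d2 + d3),
      s ≤ t → t - s - 18 * δ ≤ dist (γ s) (γ t) ∧ dist (γ s) (γ t) ≤ t - s := by
    intro s hs t ht hst
    rcases le_or_gt t d1 with h1 | h1
    · -- both in the first segment
      have hsI : s ∈ Set.Icc 0 d1 := ⟨hs.1, le_trans hst h1⟩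
      have htI : t ∈ Set.Icc 0 d1 := ⟨le_trans hs.1 hst, h1⟩
      rw [eval1 s hsI.2, eval1 t h1, hf₁.2.2 s hsI t htI,
        abs_of_nonpos (by linarith)]
      constructor <;> linarith
    · rcases le_or_gt t (d1 + d2) with h2 | h2
      · -- t in the second segment
        have htu : t - d1 ∈ Set.Icc 0 d2 := ⟨by linarith, by linarith⟩
        rcases le_or_gt s d1 with h3 | h3
        · -- s in first, t in second
          have hsI : s ∈ Set.Icc 0 d1 := ⟨hs.1, h3⟩
          rw [eval1 s h3, eval2 t h1 h2]
          have e1 : dist (f₁ s) c = d1 - s := geo_dist_right hf₁ hsI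
          have e2 : dist y (f₁ s) = s := geo_dist_left hf₁ hsI
          have e3 : dist c (f₂ (t - d1)) = t - d1 := geo_dist_left hf₂ htu
          have e4 : dist (f₂ (t - d1)) c' = d2 - (t - d1) := geo_dist_right hf₂ htu
          constructor
          · -- lower: through the chain y, f₁ s, f₂ u, c'
            have tr : dist y c' ≤ dist y (f₁ s) + dist (f₁ s) (f₂ (t - d1)) +
                dist (f₂ (t - d1)) c' := dist_triangle4 y (f₁ s) (f₂ (t - d1)) c'
            rw [e2, e4] at tr
            linarith
          · have tr : dist (f₁ s) (f₂ (t - d1)) ≤ dist (f₁ s) c + dist c (f₂ (t - d1)) :=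
              dist_triangle _ _ _
            rw [e1, e3] at tr
            linarith
        · -- both in second segment
          have hsu : s - d1 ∈ Set.Icc 0 d2 := ⟨by linarith, by linarith⟩
          rw [eval2 s h3 (by linarith), eval2 t h1 h2,
            hf₂.2.2 _ hsu _ htu, abs_of_nonpos (by linarith)]
          constructor <;> linarith
      · -- t in the third segment
        have htv : t - d1 - d2 ∈ Set.Icc 0 d3 := ⟨by linarith, by linarith [ht.2]⟩
        have e5 : dist c' (f₃ (t - d1 - d2)) = t - d1 - d2 := geo_dist_left hf₃ htv
        have e6 : dist (f₃ (t - d1 - d2)) y' = d3 - (t - d1 - d2) :=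
          geo_dist_right hf₃ htv
        rcases le_or_gt s d1 with h3 | h3
        · -- s in first, t in third: the hyperbolicity case
          have hsI : s ∈ Set.Icc 0 d1 := ⟨hs.1, h3⟩
          rw [eval1 s h3, eval3 t h2]
          have e1 : dist (f₁ s) c = d1 - s := geo_dist_right hf₁ hsI
          have e2 : dist y (f₁ s) = s := geo_dist_left hf₁ hsI
          set a := f₁ s
          set b := f₃ (t - d1 - d2)
          have hac' : d1 - s + d2 - 4 * δ ≤ dist a c' := by
            have tr : dist y c' ≤ dist y a + dist a c' := dist_triangle _ _ _
            rw [e2] at tr; linarith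
          have hbc : (t - d1 - d2) + d2 - 4 * δ ≤ dist b c := by
            have tr : dist y' c ≤ dist y' b + dist b c := dist_triangle _ _ _
            rw [dist_comm y' b, e6] at tr; linarith
          constructor
          · -- lower bound via four-point condition
            have h4 := hhyp a c' b c
            rcases max_cases (dist a b + dist c' c) (dist a c + dist c' b) with
              ⟨hmx, _⟩ | ⟨hmx, _⟩ <;> rw [hmx] at h4
            · rw [dist_comm c' c] at h4
              linarith
            · rw [e1, e5] at h4
              linarith
          · have tr : dist a b ≤ dist a c + dist c c' + dist c' b :=
              dist_triangle4 a c c' b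
            rw [e1, e5] at tr
            linarith
        · rcases le_or_gt s (d1 + d2) with h4 | h4
          · -- s in second, t in third
            have hsu : s - d1 ∈ Set.Icc 0 d2 := ⟨by linarith, by linarith⟩
            rw [eval2 s h3 h4, eval3 t h2]
            have e3 : dist c (f₂ (s - d1)) = s - d1 := geo_dist_left hf₂ hsu
            have e4 : dist (f₂ (s - d1)) c' = d2 - (s - d1) := geo_dist_right hf₂ hsu
            constructor
            · have tr : dist y' c ≤ dist y' (f₃ (t - d1 - d2)) +
                  dist (f₃ (t - d1 - d2)) (f₂ (s - d1)) + dist (f₂ (s - d1)) c :=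
                dist_triangle4 _ _ _ _
              rw [dist_comm y' (f₃ (t - d1 - d2)), e6, dist_comm (f₂ (s - d1)) c, e3,
                dist_comm (f₃ (t - d1 - d2)) (f₂ (s - d1))] at tr
              linarith
            · have tr : dist (f₂ (s - d1)) (f₃ (t - d1 - d2)) ≤
                  dist (f₂ (s - d1)) c' + dist c' (f₃ (t - d1 - d2)) :=
                dist_triangle _ _ _
              rw [e4, e5] at tr
              linarith
          · -- both in third segment
            have hsv : s - d1 - d2 ∈ Set.Icc 0 d3 := ⟨by linarith, by linarith [hs.2]⟩
            rw [eval3 s h4, eval3 t h2, hf₃.2.2 _ hsv _ htv,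
              abs_of_nonpos (by linarith)]
            constructor <;> linarith
  -- conclude, removing the ordering assumption
  intro s hs t ht
  rcases le_total s t with hst | hst
  · obtain ⟨hl, hu⟩ := key s hs t ht hst
    rw [abs_of_nonpos (by linarith)]
    constructor <;> linarith
  · obtain ⟨hl, hu⟩ := key t ht s hs hst
    rw [dist_comm (γ t) (γ s)] at hl hu
    rw [abs_of_nonneg (by linarith)]
    constructor <;> linarith
end

section
/- Contracting projections, part (b) (Proposition 3.6(b)): Let X be a proper, geodesic, δ-hyperbolic metric space, let C ⊆ X be a closed convex subset, and let Y ⊆ X be a convex subset with d(Y,C) > 30δ. Then any two projections on C of points of Y are at distance at most 9δ; that is, for all y, y' ∈ Y and all projections c of y on C and c' of y' on C, it holds d(c,c') ≤ 9δ. -/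
open Metric Filter

/-- Gromov-product form of the four-point condition. -/
lemma gp_ineq {X : Type*} [MetricSpace X] {δ : ℝ} (hhyp : IsDeltaHyperbolic X δ)
    (w x y z : X) :
    min (dist w x + dist w y - dist x y) (dist w y + dist w z - dist y z) - 2 * δ ≤
      dist w x + dist w z - dist x z := by
  have h := hhyp x z y w
  have h1 : dist y w = dist w y := dist_comm y w
  have h2 : dist z w = dist w z := dist_comm z w
  have h3 : dist x w = dist w x := dist_comm x w
  have h4 : dist z y = dist y z := dist_comm z y
  rcases max_cases (dist x y + dist z w) (dist x w + dist z y) with ⟨he, _⟩ | ⟨he, _⟩ <;>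
      rw [he] at h
  · have := min_le_left (dist w x + dist w y - dist x y)
      (dist w y + dist w z - dist y z)
    linarith
  · have := min_le_right (dist w x + dist w y - dist x y)
      (dist w y + dist w z - dist y z)
    linarith

/-- Lemma A: projections on convex sets nearly realize concatenated distances. -/
lemma projA {X : Type*} [MetricSpace X] {δ : ℝ} (hhyp : IsDeltaHyperbolic X δ)
    {C : Set X} (hC : IsConvexSubset C) {y c : X} (hc : c ∈ C)
    (hp : dist y c = infDist y C) {x : X} (hx : x ∈ C) :
    dist y c + dist c x ≤ dist y x + 4 * δ := by
  obtain ⟨f, ⟨hf0, hf1, hfd⟩, hfC⟩ := hC c hc x hx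
  set t := (dist y c + dist c x - dist y x) / 2 with ht
  have htri1 : dist y c ≤ dist y x + dist x c := dist_triangle y x c
  have htri2 : dist y x ≤ dist y c + dist c x := dist_triangle y c x
  have hxc : dist x c = dist c x := dist_comm x c
  have ht0 : 0 ≤ t := by simp only [ht]; linarith
  have htle : t ≤ dist c x := by simp only [ht]; linarith
  have htmem : t ∈ Set.Icc 0 (dist c x) := ⟨ht0, htle⟩
  have h0mem : (0 : ℝ) ∈ Set.Icc 0 (dist c x) := ⟨le_refl 0, dist_nonneg⟩
  have hendmem : dist c x ∈ Set.Icc 0 (dist c x) := ⟨dist_nonneg, le_refl _⟩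
  have hmC : f t ∈ C := hfC t htmem
  have hdm : dist c (f t) = t := by
    have := hfd 0 h0mem t htmem
    rw [hf0] at this
    rw [this, abs_of_nonpos (by linarith)]; ring
  have hmx : dist (f t) x = dist c x - t := by
    have := hfd t htmem (dist c x) hendmem
    rw [hf1] at this
    rw [this, abs_of_nonpos (by linarith)]; ring
  have key := gp_ineq hhyp c y x (f t)
  have hA : dist c y + dist c x - dist y x = 2 * t := by
    rw [dist_comm c y]; simp only [ht]; ring
  have hB : dist c x + dist c (f t) - dist x (f t) = 2 * t := by
    rw [dist_comm x (f t), hdm, hmx]; ring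
  rw [hA, hB, min_self] at key
  have hym : dist y c ≤ dist y (f t) := hp ▸ infDist_le_dist_of_mem hmC
  have hcy : dist c y = dist y c := dist_comm c y
  -- key : 2*t - 2*δ ≤ dist c y + dist c (f t) - dist y (f t)
  rw [hdm] at key
  simp only [ht] at *
  linarith

/-- **Proposition 3.6(b)** (contracting projections, part (b)): if a convex set `Y` is at
distance `> 30δ` from a closed convex set `C`, then any two projections on `C` of points
of `Y` are at distance at most `9δ`. -/
theorem contracting_projections_b
    (δ : ℝ) (X : Type*) [MetricSpace X] [ProperSpace X]
    (hgeo : IsGeodesicSpace X) (hhyp : IsDeltaHyperbolic X δ)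
    (C Y : Set X) (hCcl : IsClosed C) (hCconv : IsConvexSubset C)
    (hYconv : IsConvexSubset Y)
    (hfar : ∃ s : ℝ, 30 * δ < s ∧ ∀ y ∈ Y, ∀ c ∈ C, s ≤ dist y c)
    (y y' : X) (hy : y ∈ Y) (hy' : y' ∈ Y)
    (c c' : X) (hcC : c ∈ C) (hc'C : c' ∈ C)
    (hproj : dist y c = infDist y C) (hproj' : dist y' c' = infDist y' C) :
    dist c c' ≤ 9 * δ := by
  obtain ⟨s, hs30, hsd⟩ := hfar
  have hδ0 : 0 ≤ δ := by
    have := hhyp y y y y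
    simp at this
    linarith
  by_contra hcon
  push_neg at hcon
  -- Lemma A at y and y'
  have hA1 := projA hhyp hCconv hcC hproj hc'C
  -- dist y c + dist c c' ≤ dist y c' + 4δ
  have hA2 := projA hhyp hCconv hc'C hproj' hcC
  -- dist y' c' + dist c' c ≤ dist y' c + 4δ
  have hc'c : dist c' c = dist c c' := dist_comm c' c
  have hcy : dist c y = dist y c := dist_comm c y
  have hcy' : dist c y' = dist y' c := dist_comm c y'
  have hcc'2 : dist c c' = dist c' c := dist_comm c c'
  have hyc' : dist y c' = dist c' y := dist_comm y c'
  -- Gromov product inequality at base c with points y, y', c'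
  have key := gp_ineq hhyp c y y' c'
  -- Extract: dist c y + dist c y' - dist y y' ≤ 6δ
  have hyy'c : dist c y + dist c y' - dist y y' ≤ 6 * δ := by
    rcases min_cases (dist c y + dist c y' - dist y y')
        (dist c y' + dist c c' - dist y' c') with ⟨he, _⟩ | ⟨he, _⟩ <;> rw [he] at key
    · linarith
    · -- key : dist c y' + dist c c' - dist y' c' - 2δ ≤ dist c y + dist c c' - dist y c'
      -- with hA1, hA2, hcon this is contradictory, so anything follows
      exfalso
      linarith
  -- Geodesic from y to y' inside Y
  obtain ⟨f, ⟨hf0, hf1, hfd⟩, hfY⟩ := hYconv y hy y' hy'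
  set t := (dist y y' + dist y c - dist y' c) / 2 with ht
  have htri1 : dist y' c ≤ dist y' y + dist y c := dist_triangle y' y c
  have htri2 : dist y c ≤ dist y y' + dist y' c := dist_triangle y y' c
  have hy'y : dist y' y = dist y y' := dist_comm y' y
  have ht0 : 0 ≤ t := by simp only [ht]; linarith
  have htle : t ≤ dist y y' := by simp only [ht]; linarith
  have htmem : t ∈ Set.Icc 0 (dist y y') := ⟨ht0, htle⟩
  have h0mem : (0 : ℝ) ∈ Set.Icc 0 (dist y y') := ⟨le_refl 0, dist_nonneg⟩
  have hendmem : dist y y' ∈ Set.Icc 0 (dist y y') := ⟨dist_nonneg, le_refl _⟩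
  have hmY : f t ∈ Y := hfY t htmem
  have hdm : dist y (f t) = t := by
    have := hfd 0 h0mem t htmem
    rw [hf0] at this
    rw [this, abs_of_nonpos (by linarith)]; ring
  have hmy' : dist (f t) y' = dist y y' - t := by
    have := hfd t htmem (dist y y') hendmem
    rw [hf1] at this
    rw [this, abs_of_nonpos (by linarith)]; ring
  -- Gromov product inequality at base y with points (f t), y', c
  have key2 := gp_ineq hhyp y (f t) y' c
  have hA : dist y (f t) + dist y y' - dist (f t) y' = 2 * t := by
    rw [hdm, hmy']; ring
  have hB : dist y y' + dist y c - dist y' c = 2 * t := by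
    simp only [ht]; ring
  rw [hA, hB, min_self, hdm] at key2
  -- key2 : 2*t - 2δ ≤ t + dist y c - dist (f t) c
  have hms : s ≤ dist (f t) c := hsd (f t) hmY c hcC
  simp only [ht] at key2
  linarith
end
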